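/- A Fibonacci number F_n is of the form 2m² + 2 for some integer m if and only if F_n ∈ {2, 34}. -/

import Mathlib

/-!
Modulo 16 the Fibonacci numbers have period 24, and comparing residues forces `n = 2t + 3` with
`3 ∣ t` and `m = 4x`. With the Lucas numbers `L`, `F (2t+3) - 2(-1)^t = F t * L (t+3)` and
`F (2t+3) + 2(-1)^t = L t * F (t+3)`, so `32x² = F v * L u` with `u` odd, `6 ∣ v` and
`L u ^ 2 - 10 L u F v + 5 F v ^ 2 = 16`. Writing `L u = 4c`, `F v = 8d`, this reads
`c² - 20cd + 20d² = 1`, so `c` and `d` are coprime with `cd = x²`, and `L u` is a square.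

By Cohn's argument, `L u` is a square for odd `u` only if `u ∈ {1, 3}`: otherwise
`u = r + 2mq` with `r ∈ {1, 3}`, `m` a power of two at least `2` and `q` odd, and then
`L u ≡ -L r (mod L m)`, where `L r ∈ {1, 4}` is a square prime to `L m` and `L m ≡ 3 (mod 4)`;
so `-1` would be a square modulo `L m`. Hence `u = 3`, that is `t ∈ {0, 3}` and `F n ∈ {2, 34}`.
-/

open Nat (fib)

def lucas : ℕ → ℕ
  | 0 => 2
  | 1 => 1
  | n + 2 => lucas n + lucas (n + 1)

theorem lucas_add_two (n : ℕ) : lucas (n + 2) = lucas n + lucas (n + 1) := rfl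

theorem cast_lucas_eq_fib (n : ℕ) : (lucas n : ℤ) = 2 * fib (n + 1) - fib n := by
  induction n using Nat.twoStepInduction with
  | zero => rfl
  | one => rfl
  | more n h₀ h₁ =>
    rw [lucas_add_two, Nat.cast_add, h₀, h₁]
    simp only [Nat.fib_add_two, Nat.cast_add]
    ring

open scoped goldenRatio in
theorem cast_lucas_eq_goldenRatio (n : ℕ) : (lucas n : ℝ) = φ ^ n + ψ ^ n := by
  have h : (lucas n : ℝ) = 2 * fib (n + 1) - fib n := by exact_mod_cast cast_lucas_eq_fib n
  rw [h, ← Real.fib_succ_sub_goldenRatio_mul_fib, ← Real.fib_succ_sub_goldenConj_mul_fib]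
  linear_combination (fib n : ℝ) * Real.goldenRatio_add_goldenConj

theorem lucas_add_two_mul (b c : ℕ) :
    (lucas (c + 2 * b) : ℤ) = lucas (c + b) * lucas b - (-1) ^ b * lucas c := by
  have : (lucas (c + 2 * b) : ℝ) = lucas (c + b) * lucas b - (-1) ^ b * lucas c := by
    simp only [cast_lucas_eq_goldenRatio, ← Real.goldenRatio_mul_goldenConj]
    -- otherwise `ring` unfolds `φ` and `ψ` into expressions in `√5`
    generalize Real.goldenRatio = x
    generalize Real.goldenConj = y
    ring
  exact_mod_cast this

theorem fib_add_one_sq_sub_eq_neg_one_pow (n : ℕ) :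
    (fib (n + 1) : ℤ) ^ 2 - fib n * fib (n + 1) - fib n ^ 2 = (-1) ^ n := by
  induction n with
  | zero => simp
  | succ n ih =>
    rw [Nat.fib_add_two, Nat.cast_add, pow_succ]
    linear_combination -ih

theorem fib_two_mul_add_three_sub_eq_fib_mul_lucas (t : ℕ) :
    (fib (2 * t + 3) : ℤ) - 2 * (-1) ^ t = fib t * lucas (t + 3) := by
  rw [show 2 * t + 3 = 2 * (t + 1) + 1 by ring, Nat.fib_two_mul_add_one, cast_lucas_eq_fib]
  simp only [Nat.fib_add_two, Nat.cast_add, Nat.cast_pow]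
  linear_combination 2 * fib_add_one_sq_sub_eq_neg_one_pow t

theorem fib_two_mul_add_three_add_eq_lucas_mul_fib (t : ℕ) :
    (fib (2 * t + 3) : ℤ) + 2 * (-1) ^ t = lucas t * fib (t + 3) := by
  rw [show 2 * t + 3 = 2 * (t + 1) + 1 by ring, Nat.fib_two_mul_add_one, cast_lucas_eq_fib]
  simp only [Nat.fib_add_two, Nat.cast_add, Nat.cast_pow]
  linear_combination -2 * fib_add_one_sq_sub_eq_neg_one_pow t

theorem lucas_add_three_sq_sub_ten_mul_fib (t : ℕ) :
    (lucas (t + 3) : ℤ) ^ 2 - 10 * lucas (t + 3) * fib t + 5 * fib t ^ 2 = 16 * (-1) ^ t := by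
  rw [cast_lucas_eq_fib]
  simp only [Nat.fib_add_two, Nat.cast_add]
  linear_combination 16 * fib_add_one_sq_sub_eq_neg_one_pow t

theorem lucas_sq_sub_ten_mul_fib_add_three (t : ℕ) :
    (lucas t : ℤ) ^ 2 - 10 * lucas t * fib (t + 3) + 5 * fib (t + 3) ^ 2 = -16 * (-1) ^ t := by
  rw [cast_lucas_eq_fib]
  simp only [Nat.fib_add_two, Nat.cast_add]
  linear_combination -16 * fib_add_one_sq_sub_eq_neg_one_pow t

theorem lucas_two_mul_add_two {b : ℕ} (hb : Even b) : lucas (2 * b) + 2 = lucas b ^ 2 := by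
  have h := lucas_add_two_mul b 0
  rw [zero_add, zero_add, hb.neg_one_pow] at h
  push_cast [lucas] at h
  zify
  linear_combination h

theorem lucas_two_pow_succ_mod_four (i : ℕ) : lucas (2 ^ (i + 1)) % 4 = 3 := by
  induction i with
  | zero => rfl
  | succ i ih =>
    have h := lucas_two_mul_add_two (b := 2 ^ (i + 1)) ((Nat.even_pow' i.succ_ne_zero).2 even_two)
    rw [← pow_succ'] at h
    have h4 := congrArg (· % 4) h
    simp only [Nat.pow_mod (lucas _), ih] at h4
    omega

theorem cast_lucas_add_two_mul_mul {m : ℕ} (hm : Even m) (c h : ℕ) :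
    (lucas (c + 2 * m * h) : ZMod (lucas m)) = (-1) ^ h * lucas c := by
  induction h with
  | zero => simp
  | succ h ih =>
    have step := congrArg (Int.cast : ℤ → ZMod (lucas m)) (lucas_add_two_mul m (c + 2 * m * h))
    push_cast [hm.neg_one_pow, ZMod.natCast_self] at step
    rw [show c + 2 * m * (h + 1) = c + 2 * m * h + 2 * m by ring, step, ih, pow_succ]
    ring

theorem ZMod.not_isSquare_neg_sq_of_mod_four_eq_three {n w : ℕ} (hn : n % 4 = 3)
    (hw : w.Coprime n) : ¬IsSquare (-(w : ZMod n) ^ 2) := by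
  rintro ⟨y, hy⟩
  have hJ : jacobiSym (-1) n = -1 := by
    rw [jacobiSym.at_neg_one (Nat.odd_iff.2 (by omega)), ZMod.χ₄_nat_three_mod_four hn]
  apply ZMod.nonsquare_of_jacobiSym_eq_neg_one hJ
  set u := ZMod.unitOfCoprime w hw
  have hu : (u : ZMod n) = w := ZMod.coe_unitOfCoprime w hw
  refine ⟨y * ↑u⁻¹, ?_⟩
  rw [← hu] at hy
  push_cast
  linear_combination (↑u⁻¹ : ZMod n) ^ 2 * hy + (↑u * ↑u⁻¹ + 1 : ZMod n) * u.mul_inv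

theorem eq_one_or_three_of_isSquare_lucas {u : ℕ} (hu : Odd u) (hsq : IsSquare (lucas u)) :
    u = 1 ∨ u = 3 := by
  by_contra hne
  obtain ⟨r, j, hr, hj, rfl⟩ : ∃ r j, (r = 1 ∨ r = 3) ∧ j ≠ 0 ∧ u = r + 4 * j := by
    have := Nat.odd_iff.1 hu
    exact ⟨u % 4, u / 4, by omega, by omega, by omega⟩
  obtain ⟨e, q, hq, rfl⟩ := Nat.exists_eq_two_pow_mul_odd hj
  set m := 2 ^ (e + 1)
  have hm : lucas m % 4 = 3 := lucas_two_pow_succ_mod_four e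
  obtain ⟨w, hw, hcop⟩ : ∃ w, lucas r = w ^ 2 ∧ w.Coprime (lucas m) := by
    rcases hr with rfl | rfl
    · exact ⟨1, rfl, Nat.coprime_one_left _⟩
    · exact ⟨2, rfl, Nat.coprime_two_left.2 (Nat.odd_iff.2 (by omega))⟩
  have hcong := cast_lucas_add_two_mul_mul (Nat.even_pow.2 ⟨even_two, e.succ_ne_zero⟩) r q
  rw [show r + 2 * m * q = r + 4 * (2 ^ e * q) by ring, hq.neg_one_pow, hw] at hcong
  apply ZMod.not_isSquare_neg_sq_of_mod_four_eq_three hm hcop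
  push_cast [neg_one_mul] at hcong
  rw [← hcong]
  exact hsq.map (Nat.castRingHom _)

theorem periodic_fib_mod {M p : ℕ} (h₀ : fib p ≡ 1 [MOD M])
    (h₁ : fib (p + 1) ≡ 0 [MOD M]) : Function.Periodic (fun n ↦ fib n % M) (p + 1) := by
  intro n
  change fib (n + (p + 1)) ≡ fib n [MOD M]
  rw [show n + (p + 1) = p + n + 1 by ring, Nat.fib_add]
  simpa using (h₀.mul_right (fib n)).add (h₁.mul_right (fib (n + 1)))

theorem fib_mod_sixteen (n : ℕ) : fib n % 16 = fib (n % 24) % 16 :=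
  ((periodic_fib_mod (p := 23) (by decide) (by decide)).map_mod_nat n).symm

theorem mod_six_eq_three_of_fib_eq_two_mul_sq_add_two {n a : ℕ} (h : fib n = 2 * a ^ 2 + 2) :
    n % 6 = 3 ∧ a % 4 = 0 := by
  have table : ∀ r < 24, ∀ s < 16,
      fib r % 16 = (2 * s ^ 2 + 2) % 16 → r % 6 = 3 ∧ s % 4 = 0 := by decide
  have h16 : fib (n % 24) % 16 = (2 * (a % 16) ^ 2 + 2) % 16 := by
    rw [← fib_mod_sixteen, h]
    simp [Nat.add_mod, Nat.mul_mod, Nat.pow_mod]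
  have := table _ (n.mod_lt (by norm_num)) _ (a.mod_lt (by norm_num)) h16
  omega

theorem isSquare_of_sq_sub_ten_mul_add_five_sq {L F x : ℤ} (hL : 0 ≤ L) (hF : 8 ∣ F)
    (hQ : L ^ 2 - 10 * L * F + 5 * F ^ 2 = 16) (h : F * L = 32 * x ^ 2) : IsSquare L := by
  obtain ⟨d, rfl⟩ := hF
  obtain ⟨c, rfl⟩ : 4 ∣ L :=
    (Int.pow_dvd_pow_iff two_ne_zero).1 ⟨1 + 5 * L * d - 20 * d ^ 2, by linear_combination hQ⟩
  have hcop : IsCoprime c d := ⟨c - 20 * d, 20 * d, by linarith⟩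
  obtain ⟨y, hy | hy⟩ := Int.sq_of_isCoprime hcop (by linarith : c * d = x ^ 2)
  · exact ⟨2 * y, by rw [hy]; ring⟩
  · exact ⟨0, by nlinarith [sq_nonneg y]⟩

theorem isSquare_lucas_add_three_of_fib {t : ℕ} (ht : 6 ∣ t) {x : ℤ}
    (h : (fib (2 * t + 3) : ℤ) - 2 = 32 * x ^ 2) : IsSquare (lucas (t + 3)) := by
  have hsign : (-1 : ℤ) ^ t = 1 := (even_iff_two_dvd.2 (dvd_trans (by norm_num) ht)).neg_one_pow
  refine Int.isSquare_natCast_iff.1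
    (isSquare_of_sq_sub_ten_mul_add_five_sq (x := x) (Nat.cast_nonneg _)
    (Int.natCast_dvd_natCast.2 (Nat.fib_dvd 6 t ht)) ?_ ?_)
  · linear_combination lucas_add_three_sq_sub_ten_mul_fib t + 16 * hsign
  · linear_combination -1 * fib_two_mul_add_three_sub_eq_fib_mul_lucas t + h - 2 * hsign

theorem isSquare_lucas_of_fib {t : ℕ} (ht : t % 6 = 3) {x : ℤ}
    (h : (fib (2 * t + 3) : ℤ) - 2 = 32 * x ^ 2) : IsSquare (lucas t) := by
  have hsign : (-1 : ℤ) ^ t = -1 := (Nat.odd_iff.2 (by omega)).neg_one_pow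
  refine Int.isSquare_natCast_iff.1
    (isSquare_of_sq_sub_ten_mul_add_five_sq (x := x) (Nat.cast_nonneg _)
    (Int.natCast_dvd_natCast.2 (Nat.fib_dvd 6 (t + 3) (by omega))) ?_ ?_)
  · linear_combination lucas_sq_sub_ten_mul_fib_add_three t - 16 * hsign
  · linear_combination -1 * fib_two_mul_add_three_add_eq_lucas_mul_fib t + h + 2 * hsign

/-- **Theorem.** A Fibonacci number is of the form `2m² + 2` iff it is `2` or `34`. -/
theorem stmt12 (n : ℕ) :
    (∃ m : ℤ, (Nat.fib n : ℤ) = 2 * m ^ 2 + 2) ↔ Nat.fib n ∈ ({2, 34} : Set ℕ) := by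
  constructor
  · rintro ⟨m, hm⟩
    obtain ⟨hn, hm4⟩ :=
      mod_six_eq_three_of_fib_eq_two_mul_sq_add_two (a := m.natAbs) (by zify; simpa using hm)
    obtain ⟨x, rfl⟩ : (4 : ℤ) ∣ m := Int.natCast_dvd.2 (Nat.dvd_of_mod_eq_zero hm4)
    obtain ⟨t, rfl⟩ : ∃ t, n = 2 * t + 3 := ⟨n / 2 - 1, by omega⟩
    have h : (fib (2 * t + 3) : ℤ) - 2 = 32 * x ^ 2 := by rw [hm]; ring
    rcases (by omega : 6 ∣ t ∨ t % 6 = 3) with ht | ht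
    · have := eq_one_or_three_of_isSquare_lucas (Nat.odd_iff.2 (by omega))
        (isSquare_lucas_add_three_of_fib ht h)
      obtain rfl : t = 0 := by omega
      left; rfl
    · have := eq_one_or_three_of_isSquare_lucas (Nat.odd_iff.2 (by omega))
        (isSquare_lucas_of_fib ht h)
      obtain rfl : t = 3 := by omega
      right; rfl
  · rintro (h | h)
    · exact ⟨0, by rw [h]; norm_num⟩
    · exact ⟨4, by rw [show fib n = 34 from h]; norm_num⟩
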